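/- arXiv:2006.00604 — 10 statements merged into one kernel-verified Lean document; each statement's English description precedes it below -/
import Mathlib

section
/- For every subset X of a convex geometry (W, 𝒞), the set of extreme points of X equals the intersection of all subsets Y of X whose convex hull contains X; that is, ex(X) = ⋂ {Y ⊆ X : X ⊆ co(Y)}. -/
open Set

def interClosed {W : Type*} (𝒞 : Set (Set W)) : Prop := ∀ 𝒳 ⊆ 𝒞, ⋂₀ 𝒳 ∈ 𝒞

def antiExchange {W : Type*} (𝒞 : Set (Set W)) : Prop :=
  ∀ C ∈ 𝒞, ∀ x y : W, x ∉ C → y ∉ C → x ≠ y →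
    ∃ D ∈ 𝒞, C ⊆ D ∧ ((x ∈ D ∧ y ∉ D) ∨ (x ∉ D ∧ y ∈ D))

def hullOf {W : Type*} (𝒞 : Set (Set W)) (X : Set W) : Set W := ⋂₀ {C | C ∈ 𝒞 ∧ X ⊆ C}

def exOf {W : Type*} (𝒞 : Set (Set W)) (X : Set W) : Set W :=
  {x | x ∈ X ∧ x ∉ hullOf 𝒞 (X \ {x})}

lemma subset_hullOf {W : Type*} (𝒞 : Set (Set W)) (X : Set W) : X ⊆ hullOf 𝒞 X :=
  fun x hx C hC => hC.2 hx

lemma hullOf_mono {W : Type*} (𝒞 : Set (Set W)) {X Y : Set W} (h : X ⊆ Y) :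
    hullOf 𝒞 X ⊆ hullOf 𝒞 Y :=
  fun x hx C hC => hx C ⟨hC.1, h.trans hC.2⟩

theorem extreme_points_eq_sInter {W : Type*} (𝒞 : Set (Set W))
    (hI : interClosed 𝒞) (hAE : antiExchange 𝒞) (X : Set W) :
    exOf 𝒞 X = ⋂₀ {Y | Y ⊆ X ∧ X ⊆ hullOf 𝒞 Y} := by
  ext x
  constructor
  · rintro ⟨hxX, hx⟩ Y ⟨hYX, hXh⟩
    by_contra hxY
    have hYsub : Y ⊆ X \ {x} := fun y hy => ⟨hYX hy, fun he => hxY (he ▸ hy)⟩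
    exact hx (hullOf_mono 𝒞 hYsub (hXh hxX))
  · intro hx
    have hxX : x ∈ X := hx X ⟨Subset.rfl, subset_hullOf 𝒞 X⟩
    refine ⟨hxX, fun hmem => ?_⟩
    have hsub : X ⊆ hullOf 𝒞 (X \ {x}) := by
      intro y hy
      by_cases hyx : y = x
      · exact hyx ▸ hmem
      · exact subset_hullOf 𝒞 _ ⟨hy, hyx⟩
    exact (hx (X \ {x}) ⟨diff_subset, hsub⟩).2 rfl
end

section
/- For convex geometries 𝒞 and 𝒟 on the same finite set W, the family 𝒞 ∨ 𝒟 = {C ∩ D : C ∈ 𝒞, D ∈ 𝒟} is again a convex geometry on W, and it is the least convex geometry containing both 𝒞 and 𝒟. -/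
open Set

theorem join_of_convex_geometries {W : Type*} [Finite W] (𝒞 𝒟 : Set (Set W))
    (hC1 : interClosed 𝒞) (hC2 : antiExchange 𝒞)
    (hD1 : interClosed 𝒟) (hD2 : antiExchange 𝒟) :
    (interClosed {E : Set W | ∃ C ∈ 𝒞, ∃ D ∈ 𝒟, E = C ∩ D} ∧
      antiExchange {E : Set W | ∃ C ∈ 𝒞, ∃ D ∈ 𝒟, E = C ∩ D}) ∧
    𝒞 ⊆ {E : Set W | ∃ C ∈ 𝒞, ∃ D ∈ 𝒟, E = C ∩ D} ∧
    𝒟 ⊆ {E : Set W | ∃ C ∈ 𝒞, ∃ D ∈ 𝒟, E = C ∩ D} ∧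
    ∀ ℰ : Set (Set W), interClosed ℰ → antiExchange ℰ → 𝒞 ⊆ ℰ → 𝒟 ⊆ ℰ →
      {E : Set W | ∃ C ∈ 𝒞, ∃ D ∈ 𝒟, E = C ∩ D} ⊆ ℰ := by
  have hunivC : (univ : Set W) ∈ 𝒞 := by
    have := hC1 ∅ (empty_subset _); simpa using this
  have hunivD : (univ : Set W) ∈ 𝒟 := by
    have := hD1 ∅ (empty_subset _); simpa using this
  refine ⟨⟨?_, ?_⟩, ?_, ?_, ?_⟩
  · -- interClosed
    intro 𝒳 h𝒳
    set A : Set W := ⋂₀ {C | C ∈ 𝒞 ∧ ⋂₀ 𝒳 ⊆ C} with hA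
    set B : Set W := ⋂₀ {D | D ∈ 𝒟 ∧ ⋂₀ 𝒳 ⊆ D} with hB
    have hAmem : A ∈ 𝒞 := hC1 _ (fun C hC => hC.1)
    have hBmem : B ∈ 𝒟 := hD1 _ (fun D hD => hD.1)
    refine ⟨A, hAmem, B, hBmem, ?_⟩
    apply Subset.antisymm
    · intro z hz
      exact ⟨fun C hC => hC.2 hz, fun D hD => hD.2 hz⟩
    · intro z hz E hE
      obtain ⟨C, hC, D, hD, rfl⟩ := h𝒳 hE
      have hsub : ⋂₀ 𝒳 ⊆ C ∩ D := sInter_subset_of_mem hE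
      exact ⟨hz.1 C ⟨hC, fun w hw => (hsub hw).1⟩,
             hz.2 D ⟨hD, fun w hw => (hsub hw).2⟩⟩
  · -- antiExchange
    rintro E ⟨C, hC, D, hD, rfl⟩ x y hx hy hxy
    by_cases hxC : x ∈ C
    · have hxD : x ∉ D := fun h => hx ⟨hxC, h⟩
      by_cases hyD : y ∈ D
      · have hyC : y ∉ C := fun h => hy ⟨h, hyD⟩
        exact ⟨C, ⟨C, hC, univ, hunivD, (inter_univ C).symm⟩,
          inter_subset_left, Or.inl ⟨hxC, hyC⟩⟩
      · obtain ⟨D', hD', hsub, hsep⟩ := hD2 D hD x y hxD hyD hxy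
        exact ⟨D', ⟨univ, hunivC, D', hD', (univ_inter D').symm⟩,
          fun z hz => hsub hz.2, hsep⟩
    · by_cases hyC : y ∈ C
      · have hyD : y ∉ D := fun h => hy ⟨hyC, h⟩
        by_cases hxD : x ∈ D
        · exact ⟨D, ⟨univ, hunivC, D, hD, (univ_inter D).symm⟩,
            inter_subset_right, Or.inl ⟨hxD, hyD⟩⟩
        · obtain ⟨D', hD', hsub, hsep⟩ := hD2 D hD x y hxD hyD hxy
          exact ⟨D', ⟨univ, hunivC, D', hD', (univ_inter D').symm⟩,
            fun z hz => hsub hz.2, hsep⟩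
      · obtain ⟨C', hC', hsub, hsep⟩ := hC2 C hC x y hxC hyC hxy
        exact ⟨C', ⟨C', hC', univ, hunivD, (inter_univ C').symm⟩,
          fun z hz => hsub hz.1, hsep⟩
  · intro C hC
    exact ⟨C, hC, univ, hunivD, (inter_univ C).symm⟩
  · intro D hD
    exact ⟨univ, hunivC, D, hD, (univ_inter D).symm⟩
  · rintro ℰ hE1 _ hCE hDE E ⟨C, hC, D, hD, rfl⟩
    have : ⋂₀ {C, D} ∈ ℰ := hE1 _ (by rintro X (rfl | rfl); exacts [hCE hC, hDE hD])
    simpa using this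
end

section
/- Every finite convex geometry containing the empty set is the join of upset convexities of finitely many linear orders: if 𝒞 is a convex geometry on a finite set W with ∅ ∈ 𝒞, then there exist linear orders ≤_1, …, ≤_m on W such that 𝒞 = {C_1 ∩ ⋯ ∩ C_m : C_j upward closed in ≤_j}. -/
/-!
For `C ∈ 𝒞`, extend `{C}` to a maximal chain `𝓕` in `𝒞` and order `W` by the stage at which
points enter `𝓕`: the upsets of this order are `∅` and the members of `𝓕`, `C` among them.
Two points entering at the same stage `F` cannot be separated by a member of `𝒞` containing the
predecessor `G` of `F` in `𝓕`, since intersecting such a set with `F` would refine the maximal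
chain; by anti-exchange they are equal, so the order is linear. Intersecting upsets of these
orders over all `C ∈ 𝒞` gives back `𝒞`, as `𝒞` is closed under intersections.
-/

open Set Function

def IsUpset {W : Type*} (le : W → W → Prop) (U : Set W) : Prop :=
  ∀ x ∈ U, ∀ y, le x y → y ∈ U

namespace interClosed

variable {W : Type*} {𝒞 : Set (Set W)}

lemma univ_mem (hI : interClosed 𝒞) : (univ : Set W) ∈ 𝒞 := by
  simpa using hI ∅ (empty_subset _)

lemma inter_mem (hI : interClosed 𝒞) {A B : Set W} (hA : A ∈ 𝒞) (hB : B ∈ 𝒞) : A ∩ B ∈ 𝒞 := by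
  simpa using hI {A, B} (pair_subset hA hB)

lemma iInter_mem {ι : Sort*} (hI : interClosed 𝒞) {C : ι → Set W} (hC : ∀ i, C i ∈ 𝒞) :
    ⋂ i, C i ∈ 𝒞 := by
  simpa using hI (range C) (range_subset_iff.2 hC)

end interClosed

section Chain

variable {W : Type*} {𝓕 𝓢 : Set (Set W)} {F : Set W}

lemma IsChain.sUnion_mem [Finite W] (h : IsChain (· ⊆ ·) 𝓢) (hne : 𝓢.Nonempty) : ⋃₀ 𝓢 ∈ 𝓢 := by
  obtain ⟨F, hF, hsub⟩ :=
    h.directedOn.exists_mem_subset_of_finite_of_subset_sUnion hne (toFinite _) subset_rfl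
  rwa [hsub.antisymm (subset_sUnion_of_mem hF)]

lemma IsChain.sInter_mem [Finite W] (h : IsChain (· ⊆ ·) 𝓢) (hne : 𝓢.Nonempty) : ⋂₀ 𝓢 ∈ 𝓢 := by
  obtain ⟨F, hF⟩ := (toFinite 𝓢).exists_minimal hne
  suffices ⋂₀ 𝓢 = F from this ▸ hF.prop
  refine (sInter_subset_of_mem hF.prop).antisymm (subset_sInter fun G hG => ?_)
  rcases h.total hF.prop hG with hFG | hGF
  · exact hFG
  · exact hF.le_of_le hG hGF

lemma IsChain.exists_greatest_ssubset [Finite W] (h : IsChain (· ⊆ ·) 𝓕)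
    (hF : ∃ H ∈ 𝓕, H ⊂ F) : ∃ G ∈ 𝓕, G ⊂ F ∧ ∀ H ∈ 𝓕, H ⊂ F → H ⊆ G := by
  obtain ⟨hG, hGF⟩ := (h.mono (sep_subset 𝓕 (· ⊂ F))).sUnion_mem hF
  exact ⟨_, hG, hGF, fun _ hH hHF => subset_sUnion_of_mem ⟨hH, hHF⟩⟩

def chainLevel (𝓕 : Set (Set W)) (x : W) : Set W := ⋂₀ {F ∈ 𝓕 | x ∈ F}

/-- `x ≤ y` when `y` enters the chain no later than `x`, so that members of `𝓕` are upsets. -/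
def chainOrder (𝓕 : Set (Set W)) (x y : W) : Prop := chainLevel 𝓕 y ⊆ chainLevel 𝓕 x

lemma mem_chainLevel (x : W) : x ∈ chainLevel 𝓕 x := mem_sInter.2 fun _ hF => hF.2

lemma chainLevel_subset {x : W} (hF : F ∈ 𝓕) (hx : x ∈ F) : chainLevel 𝓕 x ⊆ F :=
  sInter_subset_of_mem ⟨hF, hx⟩

lemma chainLevel_mem [Finite W] (h : IsChain (· ⊆ ·) 𝓕) (huniv : univ ∈ 𝓕) (x : W) :
    chainLevel 𝓕 x ∈ 𝓕 :=
  ((h.mono (sep_subset _ _)).sInter_mem ⟨univ, huniv, mem_univ x⟩).1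

lemma isUpset_chainOrder (hF : F ∈ 𝓕) : IsUpset (chainOrder 𝓕) F :=
  fun _ hx y hxy => hxy.trans (chainLevel_subset hF hx) (mem_chainLevel y)

lemma mem_of_isUpset_chainOrder [Finite W] (h : IsChain (· ⊆ ·) 𝓕) (huniv : univ ∈ 𝓕)
    {U : Set W} (hU : IsUpset (chainOrder 𝓕) U) (hne : U.Nonempty) : U ∈ 𝓕 := by
  have hlevels : chainLevel 𝓕 '' U ⊆ 𝓕 := image_subset_iff.2 fun x _ => chainLevel_mem h huniv x
  have hU_eq : U = ⋃₀ (chainLevel 𝓕 '' U) := by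
    refine Subset.antisymm (fun y hy => ⟨_, mem_image_of_mem _ hy, mem_chainLevel y⟩) ?_
    rintro y ⟨_, ⟨x, hx, rfl⟩, hy⟩
    exact hU x hx y (chainLevel_subset (chainLevel_mem h huniv x) hy)
  rw [hU_eq]
  exact hlevels ((h.mono hlevels).sUnion_mem (hne.image _))

lemma isLinearOrder_chainOrder [Finite W] (h : IsChain (· ⊆ ·) 𝓕) (huniv : univ ∈ 𝓕)
    (hinj : Injective (chainLevel 𝓕)) : IsLinearOrder W (chainOrder 𝓕) where
  refl _ := subset_rfl
  trans _ _ _ hab hbc := hbc.trans hab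
  antisymm _ _ hab hba := hinj (hba.antisymm hab)
  total a b := (h.total (chainLevel_mem h huniv a) (chainLevel_mem h huniv b)).symm

end Chain

section ConvexGeometry

variable {W : Type*} {𝒞 𝓕 : Set (Set W)}

def IsChainIn (𝒞 𝓜 : Set (Set W)) : Prop := 𝓜 ⊆ 𝒞 ∧ IsChain (· ⊆ ·) 𝓜

lemma exists_maximal_isChainIn [Finite W] {C : Set W} (hC : C ∈ 𝒞) :
    ∃ 𝓕, Maximal (IsChainIn 𝒞) 𝓕 ∧ C ∈ 𝓕 := by
  obtain ⟨𝓕, hC𝓕, h𝓕⟩ := Finite.exists_le_maximal (p := IsChainIn 𝒞) (a := {C})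
    ⟨singleton_subset_iff.2 hC, IsChain.singleton⟩
  exact ⟨𝓕, h𝓕, hC𝓕 rfl⟩

lemma mem_of_maximal_isChainIn (h𝓕 : Maximal (IsChainIn 𝒞) 𝓕) {A : Set W} (hA : A ∈ 𝒞)
    (hcomp : ∀ F ∈ 𝓕, A ⊆ F ∨ F ⊆ A) : A ∈ 𝓕 :=
  h𝓕.mem_of_prop_insert ⟨insert_subset hA h𝓕.prop.1, h𝓕.prop.2.insert fun F hF _ => hcomp F hF⟩

lemma inter_mem_of_maximal_isChainIn (hI : interClosed 𝒞) (h𝓕 : Maximal (IsChainIn 𝒞) 𝓕)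
    {F G E : Set W} (hF : F ∈ 𝓕) (hG : ∀ H ∈ 𝓕, H ⊂ F → H ⊆ G) (hE : E ∈ 𝒞) (hGE : G ⊆ E) :
    E ∩ F ∈ 𝓕 := by
  refine mem_of_maximal_isChainIn h𝓕 (hI.inter_mem hE (h𝓕.prop.1 hF)) fun H hH => ?_
  rcases h𝓕.prop.2.total hF hH with hFH | hHF
  · exact Or.inl (inter_subset_right.trans hFH)
  · rcases hHF.eq_or_ssubset with rfl | hHF
    · exact Or.inl inter_subset_right
    · exact Or.inr (subset_inter ((hG H hH hHF).trans hGE) hHF.subset)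

lemma chainLevel_injective [Finite W] (hI : interClosed 𝒞) (hAE : antiExchange 𝒞)
    (h𝓕 : Maximal (IsChainIn 𝒞) 𝓕) (hempty : ∅ ∈ 𝓕) (huniv : univ ∈ 𝓕) :
    Injective (chainLevel 𝓕) := by
  intro x y hxy
  by_contra hne
  set F := chainLevel 𝓕 x
  have hF : F ∈ 𝓕 := chainLevel_mem h𝓕.prop.2 huniv x
  obtain ⟨G, hG, hGF, hpred⟩ :=
    h𝓕.prop.2.exists_greatest_ssubset ⟨∅, hempty, empty_ssubset.2 ⟨x, mem_chainLevel x⟩⟩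
  have notMem_G : ∀ z, chainLevel 𝓕 z = F → z ∉ G := fun z hz hzG =>
    hGF.2 (hz ▸ chainLevel_subset hG hzG)
  obtain ⟨E, hE, hGE, hsep⟩ :=
    hAE G (h𝓕.prop.1 hG) x y (notMem_G x rfl) (notMem_G y hxy.symm) hne
  have hEF := inter_mem_of_maximal_isChainIn hI h𝓕 hF hpred hE hGE
  have level_subset_E : ∀ z, chainLevel 𝓕 z = F → z ∈ E → F ⊆ E := fun z hz hzE =>
    hz ▸ (chainLevel_subset hEF ⟨hzE, hz ▸ mem_chainLevel z⟩).trans inter_subset_left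
  rcases hsep with ⟨hx, hy⟩ | ⟨hx, hy⟩
  · exact hy (level_subset_E x rfl hx (hxy ▸ mem_chainLevel y))
  · exact hx (level_subset_E y hxy.symm hy (mem_chainLevel x))

lemma exists_isLinearOrder_isUpset [Finite W] (hI : interClosed 𝒞) (hAE : antiExchange 𝒞)
    (hempty : ∅ ∈ 𝒞) {C : Set W} (hC : C ∈ 𝒞) :
    ∃ le : W → W → Prop, IsLinearOrder W le ∧ IsUpset le C ∧ ∀ U, IsUpset le U → U ∈ 𝒞 := by
  obtain ⟨𝓕, h𝓕, hC𝓕⟩ := exists_maximal_isChainIn hC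
  have hempty𝓕 : ∅ ∈ 𝓕 := mem_of_maximal_isChainIn h𝓕 hempty fun F _ => Or.inl (empty_subset F)
  have huniv : univ ∈ 𝓕 := mem_of_maximal_isChainIn h𝓕 hI.univ_mem fun F _ => Or.inr (subset_univ F)
  refine ⟨chainOrder 𝓕, isLinearOrder_chainOrder h𝓕.prop.2 huniv
    (chainLevel_injective hI hAE h𝓕 hempty𝓕 huniv), isUpset_chainOrder hC𝓕, fun U hU => ?_⟩
  rcases U.eq_empty_or_nonempty with rfl | hne
  · exact hempty
  · exact h𝓕.prop.1 (mem_of_isUpset_chainOrder h𝓕.prop.2 huniv hU hne)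

lemma eq_setOf_iInter_of_isUpset {ι : Type*} (hI : interClosed 𝒞) (le : ι → W → W → Prop)
    (hmem : ∀ i U, IsUpset (le i) U → U ∈ 𝒞) (hcover : ∀ C ∈ 𝒞, ∃ i, IsUpset (le i) C) :
    𝒞 = {X | ∃ C : ι → Set W, (∀ j, IsUpset (le j) (C j)) ∧ X = ⋂ j, C j} := by
  classical
  ext X
  refine ⟨fun hX => ?_, ?_⟩
  · obtain ⟨i, hi⟩ := hcover X hX
    refine ⟨fun j => if j = i then X else univ, fun j => ?_, ?_⟩
    · by_cases hj : j = i
      · simpa [hj] using hi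
      · simp only [hj, if_false]
        exact fun _ _ _ _ => mem_univ _
    · refine (subset_iInter fun j => ?_).antisymm ((iInter_subset _ i).trans (by simp))
      by_cases hj : j = i <;> simp [hj]
  · rintro ⟨C, hC, rfl⟩
    exact hI.iInter_mem fun j => hmem j _ (hC j)

end ConvexGeometry

theorem decomposition_into_linear_orders {W : Type*} [Finite W] (𝒞 : Set (Set W))
    (hI : interClosed 𝒞) (hAE : antiExchange 𝒞) (hempty : ∅ ∈ 𝒞) :
    ∃ (m : ℕ) (le : Fin m → W → W → Prop), (∀ j, IsLinearOrder W (le j)) ∧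
      𝒞 = {X : Set W | ∃ C : Fin m → Set W,
        (∀ j, ∀ x ∈ C j, ∀ y, le j x y → y ∈ C j) ∧ X = ⋂ j, C j} := by
  obtain ⟨m, ⟨e⟩⟩ := Finite.exists_equiv_fin 𝒞
  choose le hlin hup hmem using fun C : 𝒞 => exists_isLinearOrder_isUpset hI hAE hempty C.2
  refine ⟨m, fun j => le (e.symm j), fun j => hlin _,
    eq_setOf_iInter_of_isUpset hI _ (fun j => hmem _) fun C hC => ⟨e ⟨C, hC⟩, ?_⟩⟩
  simpa using hup ⟨C, hC⟩
end

section
/- Let f : W → U be a strong morphism between finite convex geometries (W, 𝒞) and (U, 𝒟). Then for all subsets A, B ⊆ U: A ⊆ co_𝒟(A ∩ B) holds in (U, 𝒟) if and only if f⁻¹(A) ⊆ co_𝒞(f⁻¹(A) ∩ f⁻¹(B)) holds in (W, 𝒞). -/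
open Set

def univImage {W U : Type*} (f : W → U) (Y : Set W) : Set U := {u | f ⁻¹' {u} ⊆ Y}

theorem strong_morphism_adequacy {W U : Type*} [Finite W] [Finite U]
    (𝒞 : Set (Set W)) (𝒟 : Set (Set U))
    (hC1 : interClosed 𝒞) (hC2 : antiExchange 𝒞)
    (hD1 : interClosed 𝒟) (hD2 : antiExchange 𝒟)
    (f : W → U) (hmor : ∀ C ∈ 𝒞, univImage f C ∈ 𝒟)
    (hstrong : ∀ D ∈ 𝒟, ∃ C ∈ 𝒞, D = univImage f C) :
    ∀ A B : Set U,
      A ⊆ hullOf 𝒟 (A ∩ B) ↔ f ⁻¹' A ⊆ hullOf 𝒞 (f ⁻¹' A ∩ f ⁻¹' B) := by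
  intro A B
  constructor
  · intro h w hw C hC
    obtain ⟨hCmem, hsub⟩ := hC
    have hD : univImage f C ∈ 𝒟 := hmor C hCmem
    have hAB : A ∩ B ⊆ univImage f C := by
      intro u hu v hv
      have hv' : f v = u := hv
      exact hsub ⟨by simp [Set.mem_preimage, hv', hu.1], by simp [Set.mem_preimage, hv', hu.2]⟩
    have : f w ∈ univImage f C := h hw (univImage f C) ⟨hD, hAB⟩
    exact this rfl
  · intro h u hu D hD
    obtain ⟨hDmem, hsub⟩ := hD
    obtain ⟨C, hCmem, rfl⟩ := hstrong D hDmem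
    have hCsub : f ⁻¹' A ∩ f ⁻¹' B ⊆ C := by
      intro w hw
      exact hsub ⟨hw.1, hw.2⟩ rfl
    intro w hw
    exact h (by simpa using hw ▸ hu : f w ∈ A) C ⟨hCmem, hCsub⟩
end

section
/- Let 𝒞 ⊆ 𝒫(W) be any family of subsets of a set W (not necessarily a convex geometry), and define, for A, B ⊆ W, the relation A ⤳ B to hold iff for every C ∈ 𝒞 with A ⊄ C there is D ∈ 𝒞 with C ⊆ D, A ⊄ D, and A ⊆ D ∪ B. Then the Or rule is valid: if A₁ ⤳ B and A₂ ⤳ B then (A₁ ∪ A₂) ⤳ B. -/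
open Set

def condNbhd {W : Type*} (𝒞 : Set (Set W)) (A B : Set W) : Prop :=
  ∀ C ∈ 𝒞, ¬ A ⊆ C → ∃ D ∈ 𝒞, C ⊆ D ∧ ¬ A ⊆ D ∧ A ⊆ D ∪ B

lemma or_aux {W : Type*} (𝒞 : Set (Set W)) (A₁ A₂ B C : Set W)
    (h1 : condNbhd 𝒞 A₁ B) (h2 : condNbhd 𝒞 A₂ B)
    (hC : C ∈ 𝒞) (hn1 : ¬ A₁ ⊆ C) :
    ∃ D ∈ 𝒞, C ⊆ D ∧ ¬ A₁ ∪ A₂ ⊆ D ∧ A₁ ∪ A₂ ⊆ D ∪ B := by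
  obtain ⟨D₁, hD₁, hCD₁, hn₁, hs₁⟩ := h1 C hC hn1
  by_cases h : A₂ ⊆ D₁ ∪ B
  · exact ⟨D₁, hD₁, hCD₁, fun hh => hn₁ (subset_union_left.trans hh),
      union_subset hs₁ h⟩
  · have hn2 : ¬ A₂ ⊆ D₁ := fun hh => h (hh.trans subset_union_left)
    obtain ⟨D₂, hD₂, hD₁₂, hn₂, hs₂⟩ := h2 D₁ hD₁ hn2
    exact ⟨D₂, hD₂, hCD₁.trans hD₁₂,
      fun hh => hn₂ (subset_union_right.trans hh),
      union_subset (hs₁.trans (union_subset_union_left B hD₁₂)) hs₂⟩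

theorem or_rule_sound {W : Type*} (𝒞 : Set (Set W)) (A₁ A₂ B : Set W)
    (h1 : condNbhd 𝒞 A₁ B) (h2 : condNbhd 𝒞 A₂ B) : condNbhd 𝒞 (A₁ ∪ A₂) B := by
  intro C hC hn
  by_cases hn1 : A₁ ⊆ C
  · have hn2 : ¬ A₂ ⊆ C := fun hh => hn (union_subset hn1 hh)
    have := or_aux 𝒞 A₂ A₁ B C h2 h1 hC hn2
    obtain ⟨D, hD, hCD, hnD, hsD⟩ := this
    exact ⟨D, hD, hCD, by rwa [union_comm], by rwa [union_comm]⟩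
  · exact or_aux 𝒞 A₁ A₂ B C h1 h2 hC hn1
end

section
/- Let 𝒞 be any family of subsets of W and define A ⤳ B as: for every C ∈ 𝒞 with A ⊄ C there is D ∈ 𝒞 with C ⊆ D, A ⊄ D, and A ⊆ D ∪ B. Then the cautious monotonicity rule is valid: if A ⤳ B₁ and A ⤳ B₂ then (A ∩ B₂) ⤳ B₁. -/
open Set

theorem cm_rule_sound {W : Type*} (𝒞 : Set (Set W)) (A B₁ B₂ : Set W)
    (h1 : condNbhd 𝒞 A B₁) (h2 : condNbhd 𝒞 A B₂) : condNbhd 𝒞 (A ∩ B₂) B₁ := by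
  intro C hC hAC
  have hAC' : ¬ A ⊆ C := fun h => hAC (fun x hx => h hx.1)
  obtain ⟨D, hD, hCD, hAD, hADB⟩ := h2 C hC hAC'
  obtain ⟨E, hE, hDE, hAE, hAEB⟩ := h1 D hD hAD
  refine ⟨E, hE, hCD.trans hDE, ?_, fun x hx => hAEB hx.1⟩
  intro hsub
  apply hAE
  intro a ha
  rcases hADB ha with h | h
  · exact hDE h
  · exact hsub ⟨ha, h⟩
end

section
/- Let (W, 𝒞) be a convex geometry with W finite and define, for A, B ⊆ W, A ⤳ B iff ex(A) ⊆ B. Then the rules CCut and CCut' are valid: (i) if A ⤳ B and (A ∩ B) ⤳ C then A ⤳ C; (ii) if A ⤳ B and B ⤳ C then (A ∪ B) ⤳ C. -/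
open Set

section Aux

variable {W : Type*} {𝒞 : Set (Set W)}

lemma hull_mem (hI : interClosed 𝒞) (X : Set W) : hullOf 𝒞 X ∈ 𝒞 :=
  hI _ (fun _ hC => hC.1)

lemma subset_hull (X : Set W) : X ⊆ hullOf 𝒞 X :=
  fun _ hx _ hC => hC.2 hx

lemma hull_min {X C : Set W} (hC : C ∈ 𝒞) (h : X ⊆ C) : hullOf 𝒞 X ⊆ C :=
  fun _ hx => hx C ⟨hC, h⟩

lemma hull_mono {X Y : Set W} (h : X ⊆ Y) : hullOf 𝒞 X ⊆ hullOf 𝒞 Y :=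
  fun _ hx C hC => hx C ⟨hC.1, h.trans hC.2⟩

lemma hull_le_hull (hI : interClosed 𝒞) {X Y : Set W} (h : X ⊆ hullOf 𝒞 Y) :
    hullOf 𝒞 X ⊆ hullOf 𝒞 Y :=
  hull_min (hull_mem hI Y) h

lemma pointAE (hI : interClosed 𝒞) (hAE : antiExchange 𝒞) {S : Set W} {x y : W}
    (hxy : x ≠ y) (hx : x ∉ hullOf 𝒞 S) (hy : y ∉ hullOf 𝒞 S)
    (hxin : x ∈ hullOf 𝒞 (S ∪ {y})) : y ∉ hullOf 𝒞 (S ∪ {x}) := by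
  intro hyin
  obtain ⟨D, hD, hsub, hcase⟩ := hAE (hullOf 𝒞 S) (hull_mem hI S) x y hx hy hxy
  have hS : S ⊆ D := (subset_hull S).trans hsub
  rcases hcase with ⟨hxD, hyD⟩ | ⟨hxD, hyD⟩
  · exact hyD (hull_min hD (union_subset hS (by simpa using hxD)) hyin)
  · exact hxD (hull_min hD (union_subset hS (by simpa using hyD)) hxin)

lemma exOf_subset (X : Set W) : exOf 𝒞 X ⊆ X := fun _ hx => hx.1

/-- If `b ∈ A` is not extreme in `A`, then extreme points of `A \\ {b}` are extreme in `A`. -/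
lemma ex_diff_subset (hI : interClosed 𝒞) (hAE : antiExchange 𝒞) {A : Set W} {b : W}
    (hbA : b ∈ A) (hb : b ∉ exOf 𝒞 A) : exOf 𝒞 (A \ {b}) ⊆ exOf 𝒞 A := by
  rintro f ⟨⟨hfA, hfb⟩, hf⟩
  simp only [mem_singleton_iff] at hfb
  refine ⟨hfA, fun hfin => ?_⟩
  have hbhull : b ∈ hullOf 𝒞 (A \ {b}) := by
    by_contra h
    exact hb ⟨hbA, h⟩
  set S : Set W := (A \ {b}) \ {f} with hSdef
  have hSf : A \ {f} = S ∪ {b} := by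
    ext z
    simp only [hSdef, mem_diff, mem_union, mem_singleton_iff]
    constructor
    · rintro ⟨hz, hzf⟩
      by_cases hzb : z = b
      · exact Or.inr hzb
      · exact Or.inl ⟨⟨hz, hzb⟩, hzf⟩
    · rintro (⟨⟨hz, _⟩, hzf⟩ | rfl)
      · exact ⟨hz, hzf⟩
      · exact ⟨hbA, Ne.symm hfb⟩
  have hSb : A \ {b} = S ∪ {f} := by
    ext z
    simp only [hSdef, mem_diff, mem_union, mem_singleton_iff]
    constructor
    · rintro ⟨hz, hzb⟩
      by_cases hzf : z = f
      · exact Or.inr hzf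
      · exact Or.inl ⟨⟨hz, hzb⟩, hzf⟩
    · rintro (⟨⟨hz, hzb⟩, _⟩ | rfl)
      · exact ⟨hz, hzb⟩
      · exact ⟨hfA, hfb⟩
  have hfS : f ∉ hullOf 𝒞 S := hf
  have hbS : b ∉ hullOf 𝒞 S := by
    intro h
    have : hullOf 𝒞 (S ∪ {b}) ⊆ hullOf 𝒞 S :=
      hull_le_hull hI (union_subset (subset_hull S) (by simpa using h))
    exact hfS (this (by rwa [← hSf]))
  have := pointAE hI hAE hfb hfS hbS (by rwa [← hSf])
  rw [hSb] at hbhull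
  exact this hbhull

/-- Krein–Milman for finite convex geometries: every set lies in the hull of its
extreme points. -/
lemma subset_hull_ex [Finite W] (hI : interClosed 𝒞) (hAE : antiExchange 𝒞) (A : Set W) :
    A ⊆ hullOf 𝒞 (exOf 𝒞 A) := by
  have key : ∀ n : ℕ, ∀ A : Set W, A.ncard = n → A ⊆ hullOf 𝒞 (exOf 𝒞 A) := by
    intro n
    induction n using Nat.strong_induction_on with
    | _ n ih =>
      intro A hn
      by_cases h : ∀ b ∈ A, b ∈ exOf 𝒞 A
      · exact fun x hx => subset_hull _ (h x hx)
      · push_neg at h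
        obtain ⟨b, hbA, hb⟩ := h
        have hlt : (A \ {b}).ncard < n := by
          subst hn
          exact Set.ncard_diff_singleton_lt_of_mem hbA A.toFinite
        have h1 : A \ {b} ⊆ hullOf 𝒞 (exOf 𝒞 (A \ {b})) := ih _ hlt _ rfl
        have h2 : exOf 𝒞 (A \ {b}) ⊆ exOf 𝒞 A := ex_diff_subset hI hAE hbA hb
        have h3 : A \ {b} ⊆ hullOf 𝒞 (exOf 𝒞 A) := h1.trans (hull_mono h2)
        intro x hx
        by_cases hxb : x = b
        · subst hxb
          have hbh : x ∈ hullOf 𝒞 (A \ {x}) := by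
            by_contra hc
            exact hb ⟨hbA, hc⟩
          exact hull_le_hull hI h3 hbh
        · exact h3 ⟨hx, hxb⟩
  exact key A.ncard A rfl

/-- The finite characterization: `ex A ⊆ B` implies `A ⊆ co (A ∩ B)`. -/
lemma subset_hull_inter [Finite W] (hI : interClosed 𝒞) (hAE : antiExchange 𝒞)
    {A B : Set W} (h : exOf 𝒞 A ⊆ B) : A ⊆ hullOf 𝒞 (A ∩ B) :=
  (subset_hull_ex hI hAE A).trans
    (hull_mono (fun x hx => ⟨exOf_subset A hx, h hx⟩))

/-- Converse direction of the characterization. -/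
lemma ex_subset_of_subset_hull {A C : Set W} (h : A ⊆ hullOf 𝒞 (A ∩ C)) :
    exOf 𝒞 A ⊆ C := by
  rintro x ⟨hxA, hx⟩
  by_contra hxC
  have : A ∩ C ⊆ A \ {x} := by
    rintro z ⟨hzA, hzC⟩
    refine ⟨hzA, fun hzx => hxC ?_⟩
    rw [mem_singleton_iff] at hzx
    rwa [← hzx]
  exact hx (hull_mono this (h hxA))

end Aux

theorem ccut_rules {W : Type*} [Finite W] (𝒞 : Set (Set W))
    (hI : interClosed 𝒞) (hAE : antiExchange 𝒞) :
    (∀ A B C : Set W, exOf 𝒞 A ⊆ B → exOf 𝒞 (A ∩ B) ⊆ C → exOf 𝒞 A ⊆ C) ∧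
    (∀ A B C : Set W, exOf 𝒞 A ⊆ B → exOf 𝒞 B ⊆ C → exOf 𝒞 (A ∪ B) ⊆ C) := by
  constructor
  · intro A B C hAB hABC
    have h1 : A ⊆ hullOf 𝒞 (A ∩ B) := subset_hull_inter hI hAE hAB
    have h2 : A ∩ B ⊆ hullOf 𝒞 (A ∩ B ∩ C) := subset_hull_inter hI hAE hABC
    have h3 : A ∩ B ∩ C ⊆ A ∩ C := fun z hz => ⟨hz.1.1, hz.2⟩
    have h4 : A ∩ B ⊆ hullOf 𝒞 (A ∩ C) := h2.trans (hull_mono h3)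
    have h5 : A ⊆ hullOf 𝒞 (A ∩ C) := h1.trans (hull_le_hull hI h4)
    exact ex_subset_of_subset_hull h5
  · intro A B C hAB hBC
    have h1 : A ⊆ hullOf 𝒞 (A ∩ B) := subset_hull_inter hI hAE hAB
    have h2 : B ⊆ hullOf 𝒞 (B ∩ C) := subset_hull_inter hI hAE hBC
    have h3 : A ∩ B ⊆ hullOf 𝒞 (B ∩ C) := (inter_subset_right).trans h2
    have h4 : A ⊆ hullOf 𝒞 (B ∩ C) := h1.trans (hull_le_hull hI h3)
    have h5 : A ∪ B ⊆ hullOf 𝒞 (B ∩ C) := union_subset h4 h2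
    have h6 : B ∩ C ⊆ (A ∪ B) ∩ C := fun z hz => ⟨Or.inr hz.1, hz.2⟩
    exact ex_subset_of_subset_hull (h5.trans (hull_mono h6))
end

section
/- Let W be a finite subset of ℝ and let co denote the convex hull operation of the relative convexity of W in ℝ (i.e., co(X) = conv(X) ∩ W for X ⊆ W, where conv is the usual convex hull in ℝ). For subsets A, B ⊆ W define A ⤳ B iff A ⊆ co(A ∩ B). Then for all P, Q, R ⊆ W: (P ∪ Q ∪ R) ⤳ (P ∪ Q), or (P ∪ Q ∪ R) ⤳ (P ∪ R), or (P ∪ Q ∪ R) ⤳ (Q ∪ R). -/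
open Set

theorem gamma_two_valid_on_finite_line (W : Set ℝ) (hW : W.Finite)
    (P Q R : Set ℝ) (hP : P ⊆ W) (hQ : Q ⊆ W) (hR : R ⊆ W) :
    P ∪ Q ∪ R ⊆ convexHull ℝ ((P ∪ Q ∪ R) ∩ (P ∪ Q)) ∩ W ∨
    P ∪ Q ∪ R ⊆ convexHull ℝ ((P ∪ Q ∪ R) ∩ (P ∪ R)) ∩ W ∨
    P ∪ Q ∪ R ⊆ convexHull ℝ ((P ∪ Q ∪ R) ∩ (Q ∪ R)) ∩ W := by
  set S := P ∪ Q ∪ R with hSdef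
  have hSW : S ⊆ W := union_subset (union_subset hP hQ) hR
  rcases S.eq_empty_or_nonempty with he | hne
  · left
    rw [he]
    exact empty_subset _
  have hSfin : S.Finite := hW.subset hSW
  obtain ⟨m, hmS, hmmin⟩ := Set.exists_min_image S id hSfin hne
  obtain ⟨M, hMS, hMmax⟩ := Set.exists_max_image S id hSfin hne
  simp only [id_eq] at hmmin hMmax
  have key : ∀ T : Set ℝ, m ∈ T → M ∈ T → S ⊆ convexHull ℝ (S ∩ T) ∩ W := by
    intro T hmT hMT x hx
    refine ⟨?_, hSW hx⟩
    have hseg : segment ℝ m M ⊆ convexHull ℝ (S ∩ T) :=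
      (convex_convexHull ℝ _).segment_subset
        (subset_convexHull ℝ _ ⟨hmS, hmT⟩) (subset_convexHull ℝ _ ⟨hMS, hMT⟩)
    have hxI : x ∈ Set.Icc m M := ⟨hmmin x hx, hMmax x hx⟩
    have : x ∈ segment ℝ m M := by
      rw [segment_eq_Icc (le_trans (hmmin x hx) (hMmax x hx))]
      exact hxI
    exact hseg this
  rcases hmS with (hm | hm) | hm <;> rcases hMS with (hM | hM) | hM
  · exact Or.inl (key _ (Or.inl hm) (Or.inl hM))
  · exact Or.inl (key _ (Or.inl hm) (Or.inr hM))
  · exact Or.inr (Or.inl (key _ (Or.inl hm) (Or.inr hM)))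
  · exact Or.inl (key _ (Or.inr hm) (Or.inl hM))
  · exact Or.inl (key _ (Or.inr hm) (Or.inr hM))
  · exact Or.inr (Or.inr (key _ (Or.inl hm) (Or.inr hM)))
  · exact Or.inr (Or.inl (key _ (Or.inr hm) (Or.inl hM)))
  · exact Or.inr (Or.inr (key _ (Or.inr hm) (Or.inl hM)))
  · exact Or.inr (Or.inl (key _ (Or.inr hm) (Or.inr hM)))
end

section
/- Let W ⊆ ℝ be any set with the relative convexity of ℝ, and for A, B ⊆ W define A ⤳ B iff for every convex C (relative to W) with A ⊄ C there is a convex D ⊇ C with A ⊄ D and A ⊆ D ∪ B. Then disjunctive rationality in triples holds: for all P, Q, R, S ⊆ W, if (P ∪ Q ∪ R) ⤳ S then (P ∪ Q) ⤳ S or (P ∪ R) ⤳ S or (Q ∪ R) ⤳ S. -/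
open Set

def RelConvex (W C : Set ℝ) : Prop := ∃ I : Set ℝ, Convex ℝ I ∧ C = I ∩ W

def condLine (W A B : Set ℝ) : Prop :=
  ∀ C : Set ℝ, RelConvex W C → ¬ A ⊆ C →
    ∃ D : Set ℝ, RelConvex W D ∧ C ⊆ D ∧ ¬ A ⊆ D ∧ A ⊆ D ∪ B

/-- upper set -/
def Upp (U : Set ℝ) : Prop := ∀ ⦃x y : ℝ⦄, x ∈ U → x ≤ y → y ∈ U
/-- lower set -/
def Low (L : Set ℝ) : Prop := ∀ ⦃x y : ℝ⦄, x ∈ L → y ≤ x → y ∈ L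

/-- right-goodness: every upper set meeting A contains a nonempty upper trace of A inside S -/
def Rg (A S : Set ℝ) : Prop :=
  ∀ U : Set ℝ, Upp U → (A ∩ U).Nonempty →
    ∃ U', Upp U' ∧ U' ⊆ U ∧ (A ∩ U').Nonempty ∧ A ∩ U' ⊆ S

def Lg (A S : Set ℝ) : Prop :=
  ∀ L : Set ℝ, Low L → (A ∩ L).Nonempty →
    ∃ L', Low L' ∧ L' ⊆ L ∧ (A ∩ L').Nonempty ∧ A ∩ L' ⊆ S

lemma upp_compl_convex {U : Set ℝ} (hU : Upp U) : Convex ℝ Uᶜ := by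
  rw [convex_iff_ordConnected]
  exact ⟨fun x hx z hz y hy hyU => hz (hU hyU hy.2)⟩

lemma low_compl_convex {L : Set ℝ} (hL : Low L) : Convex ℝ Lᶜ := by
  rw [convex_iff_ordConnected]
  exact ⟨fun x hx z hz y hy hyL => hx (hL hyL hy.1)⟩

lemma cond_of_good {W B S : Set ℝ} (hB : B ⊆ W) (hR : Rg B S) (hL : Lg B S) :
    condLine W B S := by
  intro C hC hBC
  obtain ⟨I, hIconv, rfl⟩ := hC
  obtain ⟨b, hbB, hbC⟩ := not_subset.mp hBC
  have hbW : b ∈ W := hB hbB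
  have hbI : b ∉ I := fun h => hbC ⟨h, hbW⟩
  have hIord : I.OrdConnected := convex_iff_ordConnected.mp hIconv
  by_cases hright : ∀ i ∈ I, i < b
  · obtain ⟨U', hU'up, hU'sub, ⟨b', hb'B, hb'U⟩, hU'S⟩ :=
      hR (Ici b) (fun x y hx hxy => le_trans hx hxy) ⟨b, hbB, le_refl b⟩
    refine ⟨U'ᶜ ∩ W, ⟨U'ᶜ, upp_compl_convex hU'up, rfl⟩, ?_, ?_, ?_⟩
    · rintro c ⟨hcI, hcW⟩
      exact ⟨fun hcU' => absurd (hU'sub hcU') (not_le.mpr (hright c hcI)), hcW⟩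
    · exact fun hsub => (hsub hb'B).1 hb'U
    · intro x hxB
      by_cases hx : x ∈ U'
      · exact Or.inr (hU'S ⟨hxB, hx⟩)
      · exact Or.inl ⟨hx, hB hxB⟩
  · push_neg at hright
    obtain ⟨i₁, hi₁I, hbi₁⟩ := hright
    have hleft : ∀ i ∈ I, b < i := by
      intro i hiI
      by_contra hle
      push_neg at hle
      exact hbI (hIord.out hiI hi₁I ⟨hle, hbi₁⟩)
    obtain ⟨L', hL'low, hL'sub, ⟨b', hb'B, hb'L⟩, hL'S⟩ :=
      hL (Iic b) (fun x y hx hxy => le_trans hxy hx) ⟨b, hbB, le_refl b⟩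
    refine ⟨L'ᶜ ∩ W, ⟨L'ᶜ, low_compl_convex hL'low, rfl⟩, ?_, ?_, ?_⟩
    · rintro c ⟨hcI, hcW⟩
      exact ⟨fun hcL' => absurd (hL'sub hcL') (not_le.mpr (hleft c hcI)), hcW⟩
    · exact fun hsub => (hsub hb'B).1 hb'L
    · intro x hxB
      by_cases hx : x ∈ L'
      · exact Or.inr (hL'S ⟨hxB, hx⟩)
      · exact Or.inl ⟨hx, hB hxB⟩

lemma rgood_of_cond {W A S : Set ℝ} (hA : A ⊆ W) (h : condLine W A S) : Rg A S := by
  rintro U hU ⟨a, haA, haU⟩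
  obtain ⟨D, ⟨J, hJconv, rfl⟩, hCD, hAD, hADS⟩ :=
    h (Iio a ∩ W) ⟨Iio a, convex_Iio a, rfl⟩
      (fun hsub => lt_irrefl a (hsub haA).1)
  have hJord : J.OrdConnected := convex_iff_ordConnected.mp hJconv
  -- every element of A not in J is ≥ a and lies in S
  have hout : ∀ y ∈ A, y ∉ J → a ≤ y ∧ y ∈ S := by
    intro y hyA hyJ
    have hyW : W y := hA hyA
    have hyD : y ∉ J ∩ W := fun hy => hyJ hy.1
    have hay : a ≤ y := by
      by_contra hlt
      exact hyJ (hCD ⟨not_le.mp hlt, hyW⟩).1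
    exact ⟨hay, (hADS hyA).resolve_left hyD⟩
  obtain ⟨x0, hx0A, hx0D⟩ := not_subset.mp hAD
  have hx0J : x0 ∉ J := fun hj => hx0D ⟨hj, hA hx0A⟩
  by_cases hcase : ∃ y, y ∈ A ∧ y ∉ J ∧ ∃ j ∈ J, j ≤ y
  · obtain ⟨y, hyA, hyJ, j, hjJ, hjy⟩ := hcase
    refine ⟨{z | z ∉ J ∧ j ≤ z} ∩ U, ?_, inter_subset_right, ⟨y, hyA, ⟨hyJ, hjy⟩, hU haU (hout y hyA hyJ).1⟩, ?_⟩
    · rintro z w ⟨⟨hzJ, hjz⟩, hzU⟩ hzw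
      refine ⟨⟨fun hwJ => hzJ (hJord.out hjJ hwJ ⟨hjz, hzw⟩), le_trans hjz hzw⟩, hU hzU hzw⟩
    · rintro z ⟨hzA, ⟨hzJ, _⟩, _⟩
      exact (hout z hzA hzJ).2
  · push_neg at hcase
    -- x0 is below all of J and A ∩ (-∞, x0] ⊆ S
    have hIic : ∀ y ∈ A, y ≤ x0 → y ∈ S := by
      intro y hyA hyx
      by_contra hyS
      have hyD : y ∈ J ∩ W := (hADS hyA).resolve_right hyS
      exact absurd hyx (not_le.mpr (hcase x0 hx0A hx0J y hyD.1))
    have hax0 : a ≤ x0 := (hout x0 hx0A hx0J).1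
    by_cases htop : ∃ a₂ ∈ A, x0 < a₂
    · obtain ⟨a₂, ha₂A, hx0a₂⟩ := htop
      obtain ⟨D₂, ⟨J₂, hJ₂conv, rfl⟩, hCD₂, hAD₂, hADS₂⟩ :=
        h (Iic x0 ∩ W) ⟨Iic x0, convex_Iic x0, rfl⟩
          (fun hsub => absurd (hsub ha₂A).1 (not_le.mpr hx0a₂))
      have hJ₂ord : J₂.OrdConnected := convex_iff_ordConnected.mp hJ₂conv
      have hx0J₂ : x0 ∈ J₂ := (hCD₂ ⟨le_refl x0, hA hx0A⟩).1
      obtain ⟨y, hyA, hyD₂⟩ := not_subset.mp hAD₂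
      have hyJ₂ : y ∉ J₂ := fun hj => hyD₂ ⟨hj, hA hyA⟩
      have hx0y : x0 < y := by
        by_contra hle
        exact hyJ₂ (hCD₂ ⟨not_lt.mp hle, hA hyA⟩).1
      refine ⟨{z | z ∉ J₂ ∧ x0 ≤ z} ∩ U, ?_, inter_subset_right,
        ⟨y, hyA, ⟨hyJ₂, le_of_lt hx0y⟩, hU haU (le_trans hax0 (le_of_lt hx0y))⟩, ?_⟩
      · rintro z w ⟨⟨hzJ, hxz⟩, hzU⟩ hzw
        refine ⟨⟨fun hwJ => hzJ (hJ₂ord.out hx0J₂ hwJ ⟨hxz, hzw⟩), le_trans hxz hzw⟩, hU hzU hzw⟩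
      · rintro z ⟨hzA, ⟨hzJ₂, _⟩, _⟩
        have : z ∉ J₂ ∩ W := fun hz => hzJ₂ hz.1
        exact (hADS₂ hzA).resolve_left this
    · push_neg at htop
      exact ⟨U, hU, subset_rfl, ⟨a, haA, haU⟩,
        fun z hz => hIic z hz.1 (htop z hz.1)⟩

lemma lgood_of_cond {W A S : Set ℝ} (hA : A ⊆ W) (h : condLine W A S) : Lg A S := by
  rintro L hL ⟨a, haA, haL⟩
  obtain ⟨D, ⟨J, hJconv, rfl⟩, hCD, hAD, hADS⟩ :=
    h (Ioi a ∩ W) ⟨Ioi a, convex_Ioi a, rfl⟩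
      (fun hsub => lt_irrefl a (hsub haA).1)
  have hJord : J.OrdConnected := convex_iff_ordConnected.mp hJconv
  have hout : ∀ y ∈ A, y ∉ J → y ≤ a ∧ y ∈ S := by
    intro y hyA hyJ
    have hyW : W y := hA hyA
    have hyD : y ∉ J ∩ W := fun hy => hyJ hy.1
    have hay : y ≤ a := by
      by_contra hlt
      exact hyJ (hCD ⟨not_le.mp hlt, hyW⟩).1
    exact ⟨hay, (hADS hyA).resolve_left hyD⟩
  obtain ⟨x0, hx0A, hx0D⟩ := not_subset.mp hAD
  have hx0J : x0 ∉ J := fun hj => hx0D ⟨hj, hA hx0A⟩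
  by_cases hcase : ∃ y, y ∈ A ∧ y ∉ J ∧ ∃ j ∈ J, y ≤ j
  · obtain ⟨y, hyA, hyJ, j, hjJ, hjy⟩ := hcase
    refine ⟨{z | z ∉ J ∧ z ≤ j} ∩ L, ?_, inter_subset_right, ⟨y, hyA, ⟨hyJ, hjy⟩, hL haL (hout y hyA hyJ).1⟩, ?_⟩
    · rintro z w ⟨⟨hzJ, hjz⟩, hzL⟩ hzw
      refine ⟨⟨fun hwJ => hzJ (hJord.out hwJ hjJ ⟨hzw, hjz⟩), le_trans hzw hjz⟩, hL hzL hzw⟩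
    · rintro z ⟨hzA, ⟨hzJ, _⟩, _⟩
      exact (hout z hzA hzJ).2
  · push_neg at hcase
    have hIci : ∀ y ∈ A, x0 ≤ y → y ∈ S := by
      intro y hyA hyx
      by_contra hyS
      have hyD : y ∈ J ∩ W := (hADS hyA).resolve_right hyS
      exact absurd hyx (not_le.mpr (hcase x0 hx0A hx0J y hyD.1))
    have hax0 : x0 ≤ a := (hout x0 hx0A hx0J).1
    by_cases htop : ∃ a₂ ∈ A, a₂ < x0
    · obtain ⟨a₂, ha₂A, hx0a₂⟩ := htop
      obtain ⟨D₂, ⟨J₂, hJ₂conv, rfl⟩, hCD₂, hAD₂, hADS₂⟩ :=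
        h (Ici x0 ∩ W) ⟨Ici x0, convex_Ici x0, rfl⟩
          (fun hsub => absurd (hsub ha₂A).1 (not_le.mpr hx0a₂))
      have hJ₂ord : J₂.OrdConnected := convex_iff_ordConnected.mp hJ₂conv
      have hx0J₂ : x0 ∈ J₂ := (hCD₂ ⟨le_refl x0, hA hx0A⟩).1
      obtain ⟨y, hyA, hyD₂⟩ := not_subset.mp hAD₂
      have hyJ₂ : y ∉ J₂ := fun hj => hyD₂ ⟨hj, hA hyA⟩
      have hx0y : y < x0 := by
        by_contra hle
        exact hyJ₂ (hCD₂ ⟨not_lt.mp hle, hA hyA⟩).1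
      refine ⟨{z | z ∉ J₂ ∧ z ≤ x0} ∩ L, ?_, inter_subset_right,
        ⟨y, hyA, ⟨hyJ₂, le_of_lt hx0y⟩, hL haL (le_trans (le_of_lt hx0y) hax0)⟩, ?_⟩
      · rintro z w ⟨⟨hzJ, hxz⟩, hzL⟩ hzw
        refine ⟨⟨fun hwJ => hzJ (hJ₂ord.out hwJ hx0J₂ ⟨hzw, hxz⟩), le_trans hzw hxz⟩, hL hzL hzw⟩
      · rintro z ⟨hzA, ⟨hzJ₂, _⟩, _⟩
        have : z ∉ J₂ ∩ W := fun hz => hzJ₂ hz.1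
        exact (hADS₂ hzA).resolve_left this
    · push_neg at htop
      exact ⟨L, hL, subset_rfl, ⟨a, haA, haL⟩,
        fun z hz => hIci z hz.1 (htop z hz.1)⟩

lemma clash_R {A B₁ B₂ S : Set ℝ} (hA : Rg A S) (h1 : B₁ ⊆ A) (h2 : B₂ ⊆ A)
    (hcov : A ⊆ B₁ ∪ B₂) (hf1 : ¬ Rg B₁ S) (hf2 : ¬ Rg B₂ S) : False := by
  simp only [Rg, not_forall] at hf1 hf2
  obtain ⟨U₁, hU₁, ⟨b₁, hb₁B, hb₁U⟩, hno₁⟩ := hf1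
  obtain ⟨U₂, hU₂, ⟨b₂, hb₂B, hb₂U⟩, hno₂⟩ := hf2
  push_neg at hno₁ hno₂
  set b := max b₁ b₂ with hb
  have hbA : b ∈ A := by
    rcases max_cases b₁ b₂ with ⟨he, _⟩ | ⟨he, _⟩ <;> rw [hb, he]
    · exact h1 hb₁B
    · exact h2 hb₂B
  obtain ⟨U', hU', hU'sub, ⟨y, hyA, hyU'⟩, hU'S⟩ :=
    hA (Ici b) (fun x y hx hxy => le_trans hx hxy) ⟨b, hbA, le_refl b⟩
  have hsub₁ : U' ⊆ U₁ := fun z hz => hU₁ hb₁U (le_trans (le_max_left b₁ b₂) (hU'sub hz))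
  have hsub₂ : U' ⊆ U₂ := fun z hz => hU₂ hb₂U (le_trans (le_max_right b₁ b₂) (hU'sub hz))
  have hB₁e : B₁ ∩ U' = ∅ := by
    by_contra hne
    exact hno₁ U' hU' hsub₁ (nonempty_iff_ne_empty.mpr hne)
      (fun z hz => hU'S ⟨h1 hz.1, hz.2⟩)
  have hB₂e : B₂ ∩ U' = ∅ := by
    by_contra hne
    exact hno₂ U' hU' hsub₂ (nonempty_iff_ne_empty.mpr hne)
      (fun z hz => hU'S ⟨h2 hz.1, hz.2⟩)
  rcases hcov hyA with hy | hy
  · exact eq_empty_iff_forall_notMem.mp hB₁e y ⟨hy, hyU'⟩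
  · exact eq_empty_iff_forall_notMem.mp hB₂e y ⟨hy, hyU'⟩

lemma clash_L {A B₁ B₂ S : Set ℝ} (hA : Lg A S) (h1 : B₁ ⊆ A) (h2 : B₂ ⊆ A)
    (hcov : A ⊆ B₁ ∪ B₂) (hf1 : ¬ Lg B₁ S) (hf2 : ¬ Lg B₂ S) : False := by
  simp only [Lg, not_forall] at hf1 hf2
  obtain ⟨L₁, hL₁, ⟨b₁, hb₁B, hb₁L⟩, hno₁⟩ := hf1
  obtain ⟨L₂, hL₂, ⟨b₂, hb₂B, hb₂L⟩, hno₂⟩ := hf2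
  push_neg at hno₁ hno₂
  set b := min b₁ b₂ with hb
  have hbA : b ∈ A := by
    rcases min_cases b₁ b₂ with ⟨he, _⟩ | ⟨he, _⟩ <;> rw [hb, he]
    · exact h1 hb₁B
    · exact h2 hb₂B
  obtain ⟨L', hL', hL'sub, ⟨y, hyA, hyL'⟩, hL'S⟩ :=
    hA (Iic b) (fun x y hx hxy => le_trans hxy hx) ⟨b, hbA, le_refl b⟩
  have hsub₁ : L' ⊆ L₁ := fun z hz => hL₁ hb₁L (le_trans (hL'sub hz) (min_le_left b₁ b₂))
  have hsub₂ : L' ⊆ L₂ := fun z hz => hL₂ hb₂L (le_trans (hL'sub hz) (min_le_right b₁ b₂))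
  have hB₁e : B₁ ∩ L' = ∅ := by
    by_contra hne
    exact hno₁ L' hL' hsub₁ (nonempty_iff_ne_empty.mpr hne)
      (fun z hz => hL'S ⟨h1 hz.1, hz.2⟩)
  have hB₂e : B₂ ∩ L' = ∅ := by
    by_contra hne
    exact hno₂ L' hL' hsub₂ (nonempty_iff_ne_empty.mpr hne)
      (fun z hz => hL'S ⟨h2 hz.1, hz.2⟩)
  rcases hcov hyA with hy | hy
  · exact eq_empty_iff_forall_notMem.mp hB₁e y ⟨hy, hyL'⟩
  · exact eq_empty_iff_forall_notMem.mp hB₂e y ⟨hy, hyL'⟩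

theorem delta_two_valid_on_line (W : Set ℝ) (P Q R S : Set ℝ)
    (hP : P ⊆ W) (hQ : Q ⊆ W) (hR : R ⊆ W) (hS : S ⊆ W)
    (h : condLine W (P ∪ Q ∪ R) S) :
    condLine W (P ∪ Q) S ∨ condLine W (P ∪ R) S ∨ condLine W (Q ∪ R) S := by
  by_contra hcon
  push_neg at hcon
  obtain ⟨hc₁, hc₂, hc₃⟩ := hcon
  set A := P ∪ Q ∪ R with hA
  have hAW : A ⊆ W := union_subset (union_subset hP hQ) hR
  have hARg : Rg A S := rgood_of_cond hAW h
  have hALg : Lg A S := lgood_of_cond hAW h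
  have hs₁ : P ∪ Q ⊆ A := union_subset (subset_union_left.trans subset_union_left)
    (subset_union_right.trans subset_union_left)
  have hs₂ : P ∪ R ⊆ A := union_subset (subset_union_left.trans subset_union_left)
    subset_union_right
  have hs₃ : Q ∪ R ⊆ A := union_subset (subset_union_right.trans subset_union_left)
    subset_union_right
  have hcov₁₂ : A ⊆ (P ∪ Q) ∪ (P ∪ R) := by
    rintro x ((hx | hx) | hx)
    · exact Or.inl (Or.inl hx)
    · exact Or.inl (Or.inr hx)
    · exact Or.inr (Or.inr hx)
  have hcov₁₃ : A ⊆ (P ∪ Q) ∪ (Q ∪ R) := by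
    rintro x ((hx | hx) | hx)
    · exact Or.inl (Or.inl hx)
    · exact Or.inl (Or.inr hx)
    · exact Or.inr (Or.inr hx)
  have hcov₂₃ : A ⊆ (P ∪ R) ∪ (Q ∪ R) := by
    rintro x ((hx | hx) | hx)
    · exact Or.inl (Or.inl hx)
    · exact Or.inr (Or.inl hx)
    · exact Or.inl (Or.inr hx)
  have hf₁ : ¬ Rg (P ∪ Q) S ∨ ¬ Lg (P ∪ Q) S := by
    by_contra hgood; push_neg at hgood
    exact hc₁ (cond_of_good (union_subset hP hQ) hgood.1 hgood.2)
  have hf₂ : ¬ Rg (P ∪ R) S ∨ ¬ Lg (P ∪ R) S := by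
    by_contra hgood; push_neg at hgood
    exact hc₂ (cond_of_good (union_subset hP hR) hgood.1 hgood.2)
  have hf₃ : ¬ Rg (Q ∪ R) S ∨ ¬ Lg (Q ∪ R) S := by
    by_contra hgood; push_neg at hgood
    exact hc₃ (cond_of_good (union_subset hQ hR) hgood.1 hgood.2)
  rcases hf₁ with hf₁ | hf₁ <;> rcases hf₂ with hf₂ | hf₂ <;> rcases hf₃ with hf₃ | hf₃
  · exact clash_R hARg hs₁ hs₂ hcov₁₂ hf₁ hf₂
  · exact clash_R hARg hs₁ hs₂ hcov₁₂ hf₁ hf₂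
  · exact clash_R hARg hs₁ hs₃ hcov₁₃ hf₁ hf₃
  · exact clash_L hALg hs₂ hs₃ hcov₂₃ hf₂ hf₃
  · exact clash_R hARg hs₂ hs₃ hcov₂₃ hf₂ hf₃
  · exact clash_L hALg hs₁ hs₃ hcov₁₃ hf₁ hf₃
  · exact clash_L hALg hs₁ hs₂ hcov₁₂ hf₁ hf₂
  · exact clash_L hALg hs₁ hs₂ hcov₁₂ hf₁ hf₂
end

section
/- Let 𝒞 be a convex geometry on a finite set W with ∅ ∈ 𝒞. Then there is a finite set U ⊆ ℝ² and a surjective map r : U → W such that (i) for every C ⊆ U convex in the relative convexity of U in ℝ², the set r_∀(C) = {w ∈ W : r⁻¹({w}) ⊆ C} belongs to 𝒞, and (ii) every D ∈ 𝒞 equals r_∀(C) for some relatively convex C ⊆ U. In other words, (W, 𝒞) is the strong-morphism image of a finite planar point configuration. -/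
open Set

/-!
Anti-exchange lets one enlarge any member of `𝒞` strictly inside a larger member by a single
point, so every `D ∈ 𝒞` is an initial segment of a shelling: an enumeration of `W` all of whose
initial segments lie in `𝒞`. Lay out a shelling through each `D ∈ 𝒞` on its own ray from the
origin, the rays pointing to the roots of unity and the `i`-th element at a distance in `(γ, 1]`
increasing with `i`, where `γ < 1` bounds the cosines of the angles between distinct rays.
A half-plane then cuts out any initial segment of one ray together with all the other rays,
which realises every `D ∈ 𝒞`. Conversely, a convex set meeting every ray contains the origin,
because the directions sum to zero, and hence the initial segments of the rays up to those
points; so the universal image of a convex set is an intersection of initial segments of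
shellings.
-/

section ConvexGeometry

variable {W : Type*} {𝒞 : Set (Set W)}

theorem interClosed.iInter_mem_s19 {ι : Sort*} (hI : interClosed 𝒞) {f : ι → Set W}
    (hf : ∀ k, f k ∈ 𝒞) : ⋂ k, f k ∈ 𝒞 := by
  simpa only [sInter_range] using hI (range f) (range_subset_iff.2 hf)

theorem interClosed.inter_mem_s19 (hI : interClosed 𝒞) {C D : Set W} (hC : C ∈ 𝒞) (hD : D ∈ 𝒞) :
    C ∩ D ∈ 𝒞 := by
  simpa only [sInter_pair] using hI {C, D} (pair_subset hC hD)

theorem interClosed.univ_mem_s19 (hI : interClosed 𝒞) : (univ : Set W) ∈ 𝒞 := by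
  simpa only [sInter_empty] using hI ∅ (empty_subset 𝒞)

variable [Finite W]

theorem exists_insert_mem (hI : interClosed 𝒞) (hAE : antiExchange 𝒞) {A B : Set W}
    (hA : A ∈ 𝒞) (hB : B ∈ 𝒞) (hAB : A ⊂ B) : ∃ x ∈ B \ A, insert x A ∈ 𝒞 := by
  obtain ⟨E, hEmin⟩ := (toFinite {E | E ∈ 𝒞 ∧ A ⊂ E ∧ E ⊆ B}).exists_minimal
    ⟨B, hB, hAB, subset_rfl⟩
  obtain ⟨hE, hAE', hEB⟩ := hEmin.prop
  obtain ⟨x, hxE, hxA⟩ := exists_of_ssubset hAE'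
  refine ⟨x, ⟨hEB hxE, hxA⟩, ?_⟩
  convert hE using 1
  refine (insert_subset hxE hAE'.subset).antisymm fun y hyE => ?_
  by_contra hy
  rw [mem_insert_iff, not_or] at hy
  -- Cutting `E` down by a set separating `x` from `y` would contradict the minimality of `E`.
  obtain ⟨D, hD, hAD, hxy⟩ := hAE A hA x y hxA hy.2 (Ne.symm hy.1)
  have hAED : A ⊂ E ∩ D := by
    refine (ssubset_iff_of_subset (subset_inter hAE'.subset hAD)).2 ?_
    rcases hxy with ⟨hxD, -⟩ | ⟨-, hyD⟩
    exacts [⟨x, ⟨hxE, hxD⟩, hxA⟩, ⟨y, ⟨hyE, hyD⟩, hy.2⟩]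
  have hED : E ⊆ D := fun z hz =>
    (hEmin.le_of_le ⟨hI.inter_mem_s19 hE hD, hAED, inter_subset_left.trans hEB⟩
      inter_subset_left hz).2
  rcases hxy with ⟨-, hyD⟩ | ⟨hxD, -⟩
  exacts [hyD (hED hyE), hxD (hED hxE)]

theorem exists_chain (hI : interClosed 𝒞) (hAE : antiExchange 𝒞) {A B : Set W}
    (hA : A ∈ 𝒞) (hB : B ∈ 𝒞) (hAB : A ⊆ B) :
    ∃ l : List W, l.Nodup ∧ (∀ w, w ∈ l ↔ w ∈ B \ A) ∧ ∀ i, A ∪ {w | w ∈ l.take i} ∈ 𝒞 := by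
  rcases Set.eq_or_ssubset_of_subset hAB with rfl | hAB
  · exact ⟨[], List.nodup_nil, by simp, by simpa using hA⟩
  obtain ⟨x, hx, hxA⟩ := exists_insert_mem hI hAE hA hB hAB
  obtain ⟨l, hl, hlmem, hltake⟩ := exists_chain hI hAE hxA hB (insert_subset hx.1 hAB.subset)
  refine ⟨x :: l, List.nodup_cons.2 ⟨fun h => ((hlmem x).1 h).2 (mem_insert x A), hl⟩,
    fun w => ?_, ?_⟩
  · by_cases hw : w = x
    · simpa [hw] using hx
    · simp [hw, hlmem]
  · rintro (_ | i)
    · simpa using hA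
    · convert hltake i using 1
      ext w
      simp only [List.take_succ_cons, List.mem_cons, mem_union, mem_ofPred_eq, mem_insert_iff]
      tauto
termination_by (B \ A).ncard
decreasing_by
  exact ncard_lt_ncard
    ((ssubset_iff_of_subset (sdiff_subset_sdiff_right (subset_insert x A))).2
      ⟨x, hx, fun h => h.2 (mem_insert x A)⟩) (toFinite _)

structure IsShelling (𝒞 : Set (Set W)) (ρ : W → ℕ) : Prop where
  injective : Function.Injective ρ
  sublevel_mem : ∀ i, {w | ρ w < i} ∈ 𝒞

theorem exists_isShelling (hI : interClosed 𝒞) (hAE : antiExchange 𝒞) (hempty : ∅ ∈ 𝒞)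
    {D : Set W} (hD : D ∈ 𝒞) : ∃ ρ, IsShelling 𝒞 ρ ∧ ∃ m, {w | ρ w < m} = D := by
  classical
  obtain ⟨l₁, hl₁, hl₁mem, hl₁take⟩ := exists_chain hI hAE hempty hD (empty_subset D)
  obtain ⟨l₂, hl₂, hl₂mem, hl₂take⟩ := exists_chain hI hAE hD hI.univ_mem_s19 (subset_univ D)
  simp only [sdiff_empty, empty_union] at hl₁mem hl₁take
  have hmem : ∀ w, w ∈ l₁ ++ l₂ := fun w => by
    by_cases hw : w ∈ D
    exacts [List.mem_append_left _ ((hl₁mem w).2 hw),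
      List.mem_append_right _ ((hl₂mem w).2 ⟨trivial, hw⟩)]
  have htake : ∀ i, {w | w ∈ (l₁ ++ l₂).take i} ∈ 𝒞 := fun i => by
    rcases le_or_gt i l₁.length with h | h
    · rw [List.take_append_of_le_length h]
      exact hl₁take i
    · convert hl₂take (i - l₁.length) using 1
      ext w
      rw [List.take_append, List.take_of_length_le h.le]
      simp [hl₁mem]
  refine ⟨(l₁ ++ l₂).idxOf, ⟨fun x y h => (List.idxOf_inj (hmem x)).1 h, fun i => ?_⟩,
    l₁.length, ?_⟩
  · simpa only [← List.mem_take_iff_idxOf_lt (hmem _)] using htake i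
  · ext w
    rw [mem_ofPred_eq, ← List.mem_take_iff_idxOf_lt (hmem w), List.take_left, hl₁mem]

theorem IsShelling.mem_of_downward_closed {ρ : W → ℕ} (hρ : IsShelling 𝒞 ρ) {T : Set W}
    (hT : ∀ v ∈ T, ∀ w, ρ w ≤ ρ v → w ∈ T) : T ∈ 𝒞 := by
  classical
  have := Fintype.ofFinite W
  convert hρ.sublevel_mem ((Finset.univ.filter (· ∈ T)).sup fun v => ρ v + 1) using 1
  ext w
  simp only [mem_ofPred_eq, Finset.lt_sup_iff, Finset.mem_filter, Finset.mem_univ, true_and,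
    Nat.lt_succ_iff]
  exact ⟨fun hw => ⟨w, hw, le_rfl⟩, fun ⟨v, hv, hwv⟩ => hT v hv w hwv⟩

end ConvexGeometry

theorem univImage_snd_ofInjective {ι W E : Type*} {g : ι × W → E} (hg : Function.Injective g)
    (K : Set E) :
    univImage (Prod.snd ∘ (Equiv.ofInjective g hg).symm) (Subtype.val ⁻¹' K) =
      {w | ∀ k, g (k, w) ∈ K} := by
  ext w
  simp only [univImage, subset_def, mem_preimage, mem_singleton_iff, Function.comp_apply,
    mem_ofPred_eq]
  constructor
  · intro h k
    exact h ⟨g (k, w), (k, w), rfl⟩ (by rw [Equiv.ofInjective_symm_apply])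
  · rintro h ⟨_, ⟨k, w'⟩, rfl⟩ hw
    rw [Equiv.ofInjective_symm_apply] at hw
    subst hw
    exact h k

section RayConfiguration

variable {ι E : Type*} [AddCommGroup E] [Module ℝ E]

/-- `p k i` is the `i`-th point on the `k`-th ray. -/
structure IsRayConfiguration (p : ι → ℕ → E) : Prop where
  injective : Function.Injective (Function.uncurry p)
  mem_of_le : ∀ K : Set E, Convex ℝ K → ∀ j : ι → ℕ, (∀ k, p k (j k) ∈ K) →
    ∀ k i, i ≤ j k → p k i ∈ K
  exposed : ∀ k m, ∃ K : Set E, Convex ℝ K ∧ ∀ k' i, p k' i ∈ K ↔ (k' = k → i < m)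

theorem IsRayConfiguration.map {F : Type*} [AddCommGroup F] [Module ℝ F] {p : ι → ℕ → E}
    (hp : IsRayConfiguration p) (e : E ≃ₗ[ℝ] F) : IsRayConfiguration fun k i => e (p k i) where
  injective := e.injective.comp hp.injective
  mem_of_le K hK := hp.mem_of_le (e ⁻¹' K) (hK.linear_preimage e.toLinearMap)
  exposed k m := by
    obtain ⟨K, hK, hpK⟩ := hp.exposed k m
    exact ⟨e '' K, hK.linear_image e.toLinearMap, fun k' i => by
      rw [e.injective.mem_set_image, hpK]⟩

variable {W : Type*} [Finite W] {𝒞 : Set (Set W)} {p : ι → ℕ → E} {ρ : ι → W → ℕ}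

theorem IsRayConfiguration.setOf_forall_mem_of_convex (hp : IsRayConfiguration p)
    (hI : interClosed 𝒞) (hρ : ∀ k, IsShelling 𝒞 (ρ k)) {K : Set E} (hK : Convex ℝ K) :
    {w | ∀ k, p k (ρ k w) ∈ K} ∈ 𝒞 := by
  set S := {w | ∀ k, p k (ρ k w) ∈ K}
  have hS : S = ⋂ k, {w | ∃ v ∈ S, ρ k w ≤ ρ k v} := by
    ext w
    simp only [mem_iInter, mem_ofPred_eq]
    refine ⟨fun hw k => ⟨w, hw, le_rfl⟩, fun hw k => ?_⟩
    obtain ⟨v, hv, hwv⟩ := hw k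
    exact hp.mem_of_le K hK (fun k' => ρ k' v) hv k _ hwv
  rw [hS]
  exact hI.iInter_mem_s19 fun k => (hρ k).mem_of_downward_closed
    fun w ⟨v, hv, hwv⟩ u huw => ⟨v, hv, huw.trans hwv⟩

theorem IsRayConfiguration.exists_strongMorphism [Finite ι] [Nonempty ι]
    (hp : IsRayConfiguration p) (hI : interClosed 𝒞) (hρ : ∀ k, IsShelling 𝒞 (ρ k))
    (hcover : ∀ D ∈ 𝒞, ∃ k m, {w | ρ k w < m} = D) :
    ∃ (U : Set E), U.Finite ∧
      ∃ r : ↥U → W, Function.Surjective r ∧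
        (∀ C : Set ↥U, (∃ K : Set E, Convex ℝ K ∧ C = Subtype.val ⁻¹' K) →
          univImage r C ∈ 𝒞) ∧
        (∀ D ∈ 𝒞, ∃ C : Set ↥U,
          (∃ K : Set E, Convex ℝ K ∧ C = Subtype.val ⁻¹' K) ∧
          D = univImage r C) := by
  set g : ι × W → E := fun kw => p kw.1 (ρ kw.1 kw.2)
  have hg : Function.Injective g := fun ⟨k, w⟩ ⟨k', w'⟩ h => by
    obtain ⟨rfl, hkw⟩ := Prod.ext_iff.1 (@hp.injective (k, ρ k w) (k', ρ k' w') h)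
    rw [(hρ k).injective hkw]
  refine ⟨range g, finite_range g, Prod.snd ∘ (Equiv.ofInjective g hg).symm,
    Prod.snd_surjective.comp (Equiv.surjective _), ?_, fun D hD => ?_⟩
  · rintro C ⟨K, hK, rfl⟩
    rw [univImage_snd_ofInjective]
    exact hp.setOf_forall_mem_of_convex hI hρ hK
  · obtain ⟨k, m, rfl⟩ := hcover D hD
    obtain ⟨K, hK, hpK⟩ := hp.exposed k m
    refine ⟨_, ⟨K, hK, rfl⟩, ?_⟩
    rw [univImage_snd_ofInjective]
    simp [g, hpK]

end RayConfiguration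

section Construction

variable {ι : Type*} [Fintype ι]

theorem zero_mem_of_smul_mem [Nonempty ι] {E : Type*} [AddCommGroup E] [Module ℝ E]
    {v : ι → E} (hsum : ∑ k, v k = 0) {K : Set E} (hK : Convex ℝ K) {c : ι → ℝ}
    (hc : ∀ k, 0 < c k) (hcK : ∀ k, c k • v k ∈ K) : (0 : E) ∈ K := by
  have h := hK.centerMass_mem (t := Finset.univ) (w := fun k => (c k)⁻¹)
    (fun k _ => (inv_pos.2 (hc k)).le) (Finset.sum_pos (fun k _ => inv_pos.2 (hc k))
      Finset.univ_nonempty) (fun k _ => hcK k)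
  rwa [Finset.centerMass, Finset.sum_congr rfl fun k _ => inv_smul_smul₀ (hc k).ne' (v k), hsum,
    smul_zero] at h

noncomputable def radius (γ : ℝ) (i : ℕ) : ℝ := 1 - (1 - γ) / (i + 2)

variable {γ : ℝ}

theorem radius_strictMono (hγ : γ < 1) : StrictMono (radius γ) := fun i j hij => by
  unfold radius
  gcongr

theorem lt_radius (hγ : γ < 1) (i : ℕ) : γ < radius γ i := by
  have : (1 - γ) / (i + 2) < 1 - γ :=
    div_lt_self (by linarith) (by linarith [i.cast_nonneg (α := ℝ)])
  unfold radius
  linarith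

theorem radius_le_one (hγ : γ ≤ 1) (i : ℕ) : radius γ i ≤ 1 := by
  unfold radius
  have : 0 ≤ (1 - γ) / (i + 2) := by positivity
  linarith

variable {E : Type*} [NormedAddCommGroup E] [InnerProductSpace ℝ E] {v : ι → E}

theorem exists_inner_le_of_norm_eq_one [Nonempty ι] (hv : ∀ k, ‖v k‖ = 1)
    (hinj : Function.Injective v) :
    ∃ γ, 0 ≤ γ ∧ γ < 1 ∧ ∀ k k', k ≠ k' → inner ℝ (v k) (v k') ≤ γ := by
  classical
  set f : ι × ι → ℝ := fun q => if q.1 = q.2 then 0 else inner ℝ (v q.1) (v q.2)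
  obtain ⟨q, hq⟩ := Finite.exists_max f
  have hf : ∀ q, f q < 1 := fun q => by
    by_cases h : q.1 = q.2
    · simp [f, h]
    · simpa [f, h] using (inner_lt_one_iff_real_of_norm_eq_one (hv _) (hv _)).2 (hinj.ne h)
  obtain ⟨k⟩ := ‹Nonempty ι›
  refine ⟨f q, by simpa [f] using hq (k, k), hf q, fun k k' hkk' => ?_⟩
  simpa [f, hkk'] using hq (k, k')

theorem isRayConfiguration_radius_smul [Nonempty ι] (hv : ∀ k, ‖v k‖ = 1)
    (hsum : ∑ k, v k = 0) (hγ0 : 0 ≤ γ) (hγ1 : γ < 1)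
    (hvγ : ∀ k k', k ≠ k' → inner ℝ (v k) (v k') ≤ γ) :
    IsRayConfiguration fun k i => radius γ i • v k := by
  have hpos : ∀ i, 0 < radius γ i := fun i => hγ0.trans_lt (lt_radius hγ1 i)
  have inner_self : ∀ k i, inner ℝ (v k) (radius γ i • v k) = radius γ i := fun k i => by
    rw [real_inner_smul_right, real_inner_self_eq_norm_sq, hv, one_pow, mul_one]
  -- Every other ray stays below the level `γ`, which every radius exceeds.
  have inner_lt : ∀ {k k'}, k ≠ k' → ∀ i j, inner ℝ (v k) (radius γ j • v k') < radius γ i :=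
    fun hkk' i j => by
      rw [real_inner_smul_right]
      nlinarith [hvγ _ _ hkk', radius_le_one hγ1.le j, hpos j, lt_radius hγ1 i]
  refine ⟨fun ⟨k, i⟩ ⟨k', i'⟩ h => ?_, fun K hK j hj k i hij => ?_, fun k m => ?_⟩
  · have h' := congrArg (inner ℝ (v k)) h
    simp only [Function.uncurry_apply_pair, inner_self] at h'
    obtain rfl : k = k' := by
      by_contra hkk'
      exact (inner_lt hkk' i i').ne h'.symm
    rw [inner_self] at h'
    rw [(radius_strictMono hγ1).injective h']
  · have h0 := zero_mem_of_smul_mem hsum hK (fun k => hpos (j k)) hj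
    rw [← div_mul_cancel₀ (radius γ i) (hpos (j k)).ne', ← smul_smul]
    refine hK.smul_mem_of_zero_mem h0 (hj k) ⟨div_nonneg (hpos i).le (hpos (j k)).le, ?_⟩
    exact (div_le_one (hpos (j k))).2 ((radius_strictMono hγ1).monotone hij)
  · refine ⟨{x | inner ℝ (v k) x < radius γ m},
      convex_halfSpace_lt (innerₗ E (v k)).isLinear _, fun k' i => ?_⟩
    by_cases hk' : k' = k
    · subst hk'
      simp [inner_self, (radius_strictMono hγ1).lt_iff_lt]
    · exact iff_of_true (inner_lt (Ne.symm hk') m i) (absurd · hk')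

theorem exists_norm_eq_one_sum_eq_zero [Nontrivial ι] :
    ∃ v : ι → ℂ, (∀ k, ‖v k‖ = 1) ∧ Function.Injective v ∧ ∑ k, v k = 0 := by
  set d := Fintype.card ι
  have hd : 1 < d := Fintype.one_lt_card
  have hζ := Complex.isPrimitiveRoot_exp d (by omega)
  set e := Fintype.equivFin ι
  refine ⟨fun k => Complex.exp (2 * Real.pi * Complex.I / d) ^ (e k : ℕ), fun k => ?_,
    fun k k' h => e.injective (Fin.ext (hζ.pow_inj (e k).isLt (e k').isLt h)), ?_⟩
  · rw [norm_pow, hζ.norm'_eq_one (by omega), one_pow]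
  · rw [e.sum_comp (fun i : Fin d => _ ^ (i : ℕ)), Fin.sum_univ_eq_sum_range]
    exact hζ.geom_sum_eq_zero hd

theorem exists_isRayConfiguration_prod {ι : Type*} [Finite ι] [Nontrivial ι] :
    ∃ p : ι → ℕ → ℝ × ℝ, IsRayConfiguration p := by
  have := Fintype.ofFinite ι
  obtain ⟨v, hv, hinj, hsum⟩ := exists_norm_eq_one_sum_eq_zero (ι := ι)
  obtain ⟨γ, hγ0, hγ1, hvγ⟩ := exists_inner_le_of_norm_eq_one hv hinj
  exact ⟨_, (isRayConfiguration_radius_smul hv hsum hγ0 hγ1 hvγ).map Complex.equivRealProdLm⟩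

end Construction

theorem richter_rogers_strong_morphism {W : Type*} [Finite W] (𝒞 : Set (Set W))
    (hI : interClosed 𝒞) (hAE : antiExchange 𝒞) (hempty : (∅ : Set W) ∈ 𝒞) :
    ∃ (U : Set (ℝ × ℝ)), U.Finite ∧
      ∃ r : ↥U → W, Function.Surjective r ∧
        (∀ C : Set ↥U, (∃ K : Set (ℝ × ℝ), Convex ℝ K ∧ C = Subtype.val ⁻¹' K) →
          univImage r C ∈ 𝒞) ∧
        (∀ D ∈ 𝒞, ∃ C : Set ↥U,
          (∃ K : Set (ℝ × ℝ), Convex ℝ K ∧ C = Subtype.val ⁻¹' K) ∧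
          D = univImage r C) := by
  choose ρ hρ hρD using fun D : 𝒞 => exists_isShelling hI hAE hempty D.2
  have : Nonempty 𝒞 := ⟨⟨∅, hempty⟩⟩
  -- Two rays for each member of `𝒞`, since a ray configuration needs at least two rays.
  obtain ⟨p, hp⟩ := exists_isRayConfiguration_prod (ι := Bool × 𝒞)
  exact hp.exists_strongMorphism hI (fun k => hρ k.2)
    fun D hD => ⟨(true, ⟨D, hD⟩), hρD ⟨D, hD⟩⟩
end
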